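/- arXiv:2410.16280 — 2 statements merged into one kernel-verified Lean document; each statement's English description precedes it below -/
import Mathlib

section
/- Let M be a positive integer, let K ⊆ ℝ^M be a nonempty compact set, let F : ℝ^M → ℝ be continuous, let a ∈ ℝ^M, and suppose u* ∈ K is the unique maximizer of u ↦ ⟨a, u⟩ over K (i.e., ⟨a, u⟩ < ⟨a, u*⟩ for all u ∈ K with u ≠ u*). Then for every open neighborhood V of u* there exists ν₀ ∈ ℝ such that for all ν ≥ ν₀, every maximizer over K of the function u ↦ F(u) + ν·⟨a, u⟩ lies in V. -/
/-!
By compactness, `⟪a, ·⟫` stays a fixed gap `δ > 0` below its maximum on `K \ V`, while `F` is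
bounded by some `C` on `K`. A maximiser `v ∉ V` of `F + ν⟪a, ·⟫` would beat `uStar`, forcing
`ν δ ≤ F v - F uStar ≤ 2 C`, which fails once `ν > 2 C / δ`.
-/

open scoped RealInnerProductSpace
open Filter Set

section PenaltyMaximizers

variable {X : Type*} {K V : Set X} {F g : X → ℝ} {x₀ : X}

theorem mem_of_isMaxOn_add_mul {δ C ν : ℝ} (hδ : 0 < δ) (hgap : ∀ u ∈ K \ V, g u + δ ≤ g x₀)
    (hF : ∀ u ∈ K, |F u| ≤ C) (hν : 2 * C < ν * δ) (hx₀ : x₀ ∈ K) {v : X} (hv : v ∈ K)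
    (hvmax : IsMaxOn (fun u => F u + ν * g u) K v) : v ∈ V := by
  by_contra hvV
  have hν_pos : 0 < ν := by
    have hC : 0 ≤ C := (abs_nonneg _).trans (hF x₀ hx₀)
    exact pos_of_mul_pos_left (by linarith) hδ.le
  have hcompare : F x₀ + ν * g x₀ ≤ F v + ν * g v := isMaxOn_iff.1 hvmax x₀ hx₀
  have hgain : ν * δ ≤ ν * (g x₀ - g v) :=
    mul_le_mul_of_nonneg_left (by linarith [hgap v ⟨hv, hvV⟩]) hν_pos.le
  linarith [abs_le.1 (hF v hv), abs_le.1 (hF x₀ hx₀)]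

variable [TopologicalSpace X]

theorem IsCompact.exists_pos_forall_add_le_of_strictMax (hK : IsCompact K)
    (hg : ContinuousOn g K) (hmax : ∀ u ∈ K, u ≠ x₀ → g u < g x₀) (hV : IsOpen V)
    (hx₀V : x₀ ∈ V) : ∃ δ > 0, ∀ u ∈ K \ V, g u + δ ≤ g x₀ := by
  rcases (K \ V).eq_empty_or_nonempty with hempty | hne
  · exact ⟨1, one_pos, by simp [hempty]⟩
  obtain ⟨w, ⟨hwK, hwV⟩, hw⟩ :=
    (hK.diff hV).exists_isMaxOn hne (hg.mono sdiff_subset)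
  have hwx₀ : g w < g x₀ := hmax w hwK (ne_of_mem_of_not_mem hx₀V hwV).symm
  refine ⟨g x₀ - g w, sub_pos.2 hwx₀, fun u hu => ?_⟩
  linarith [isMaxOn_iff.1 hw u hu]

theorem IsCompact.eventually_isMaxOn_add_mul_mem (hK : IsCompact K) (hF : ContinuousOn F K)
    (hg : ContinuousOn g K) (hx₀ : x₀ ∈ K) (hmax : ∀ u ∈ K, u ≠ x₀ → g u < g x₀)
    (hV : IsOpen V) (hx₀V : x₀ ∈ V) :
    ∀ᶠ ν in atTop, ∀ v ∈ K, IsMaxOn (fun u => F u + ν * g u) K v → v ∈ V := by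
  obtain ⟨δ, hδ, hgap⟩ := hK.exists_pos_forall_add_le_of_strictMax hg hmax hV hx₀V
  obtain ⟨C, hC⟩ := hK.exists_bound_of_continuousOn hF
  filter_upwards [eventually_gt_atTop (2 * C / δ)] with ν hν v hv hvmax
  exact mem_of_isMaxOn_add_mul hδ hgap (fun u hu => hC u hu) ((div_lt_iff₀ hδ).1 hν) hx₀ hv hvmax

end PenaltyMaximizers

theorem stmt_6_general (M : ℕ) (K : Set (EuclideanSpace ℝ (Fin M)))
    (hKcp : IsCompact K)
    (F : EuclideanSpace ℝ (Fin M) → ℝ) (hF : Continuous F)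
    (a : EuclideanSpace ℝ (Fin M))
    (uStar : EuclideanSpace ℝ (Fin M)) (huK : uStar ∈ K)
    (hstrict : ∀ u ∈ K, u ≠ uStar → ⟪a, u⟫ < ⟪a, uStar⟫) :
    ∀ V : Set (EuclideanSpace ℝ (Fin M)), IsOpen V → uStar ∈ V →
      ∃ ν₀ : ℝ, ∀ ν : ℝ, ν₀ ≤ ν →
        ∀ v ∈ K, (∀ u ∈ K, F u + ν * ⟪a, u⟫ ≤ F v + ν * ⟪a, v⟫) → v ∈ V := by
  intro V hV huV
  have hinner : Continuous fun u : EuclideanSpace ℝ (Fin M) => ⟪a, u⟫ :=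
    continuous_const.inner continuous_id
  obtain ⟨ν₀, hν₀⟩ := eventually_atTop.1 <| hKcp.eventually_isMaxOn_add_mul_mem
    hF.continuousOn hinner.continuousOn huK hstrict hV huV
  exact ⟨ν₀, fun ν hν v hv hvmax => hν₀ ν hν v hv (isMaxOn_iff.2 hvmax)⟩

/-- If `uStar ∈ K` is the unique (strict) maximizer of `u ↦ ⟨a, u⟩` over the
nonempty compact set `K`, and `F` is continuous, then for every open neighborhood `V` of
`uStar` there is `ν₀` such that for all `ν ≥ ν₀`, every maximizer over `K` of
`u ↦ F u + ν⟨a, u⟩` lies in `V`. -/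
theorem stmt_6 (M : ℕ) (hM : 0 < M) (K : Set (EuclideanSpace ℝ (Fin M)))
    (hKne : K.Nonempty) (hKcp : IsCompact K)
    (F : EuclideanSpace ℝ (Fin M) → ℝ) (hF : Continuous F)
    (a : EuclideanSpace ℝ (Fin M))
    (uStar : EuclideanSpace ℝ (Fin M)) (huK : uStar ∈ K)
    (hstrict : ∀ u ∈ K, u ≠ uStar → ⟪a, u⟫ < ⟪a, uStar⟫) :
    ∀ V : Set (EuclideanSpace ℝ (Fin M)), IsOpen V → uStar ∈ V →
      ∃ ν₀ : ℝ, ∀ ν : ℝ, ν₀ ≤ ν →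
        ∀ v ∈ K, (∀ u ∈ K, F u + ν * ⟪a, u⟫ ≤ F v + ν * ⟪a, v⟫) → v ∈ V :=
  stmt_6_general M K hKcp F hF a uStar huK hstrict
end

section
/- Let M be a positive integer, let K ⊆ ℝ^M be a nonempty compact set, let Q be a real M×M matrix, let q, a, L ∈ ℝ^M, let d : ℝ^M → ℝ^M be continuous, and define c(u, ν) = ⟨u, Q u⟩ + ⟨q, u⟩ + ν·⟨a, u⟩ + ⟨L, d(u)⟩. Suppose u* ∈ K is the unique maximizer of u ↦ ⟨a, u⟩ over K, and let u^c : ℝ → ℝ^M be any function such that for every ν, u^c(ν) ∈ K and u^c(ν) maximizes u ↦ c(u, ν) over K. Then u^c(ν) → u* as ν → ∞. -/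
/-!
Comparing `c(u^c ν, ν)` with `c(u*, ν)` and bounding the `ν`-independent part of `c` on the
compact set `K` gives `⟨a, u*⟩ - C / ν ≤ ⟨a, u^c ν⟩ ≤ ⟨a, u*⟩`, so `⟨a, u^c ν⟩ → ⟨a, u*⟩`.
Every cluster point of `u^c` lies in `K` and then maximizes `⟨a, ·⟩`, hence equals `u*`; by
compactness `u^c ν → u*`.
-/

open scoped RealInnerProductSpace Matrix
open Filter Topology

theorem IsCompact.tendsto_nhds_of_tendsto_comp_of_forall_lt {X ι : Type*} [TopologicalSpace X]
    {K : Set X} (hK : IsCompact K) {f : X → ℝ} (hf : Continuous f) {x₀ : X}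
    (hx₀ : ∀ x ∈ K, x ≠ x₀ → f x < f x₀) {l : Filter ι} {u : ι → X}
    (huK : ∀ᶠ i in l, u i ∈ K) (hfu : Tendsto (f ∘ u) l (𝓝 (f x₀))) :
    Tendsto u l (𝓝 x₀) := by
  refine hK.tendsto_nhds_of_unique_mapClusterPt huK fun y hyK hy => ?_
  have hfy : f y = f x₀ :=
    eq_of_nhds_neBot ((hy.continuousAt_comp hf.continuousAt).clusterPt.mono hfu)
  by_contra hne
  exact (hx₀ y hyK hne).ne hfy

theorem IsCompact.tendsto_nhds_of_isMaxOn_add_mul {X : Type*} [TopologicalSpace X]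
    {K : Set X} (hK : IsCompact K) {f g : X → ℝ} (hf : Continuous f) (hg : BddAbove (g '' K))
    {x₀ : X} (hx₀K : x₀ ∈ K) (hx₀ : ∀ x ∈ K, x ≠ x₀ → f x < f x₀) {u : ℝ → X}
    (huK : ∀ ν, u ν ∈ K) (hu : ∀ ν, IsMaxOn (fun x => g x + ν * f x) K (u ν)) :
    Tendsto u atTop (𝓝 x₀) := by
  obtain ⟨B, hB⟩ := hg
  have hB : ∀ x ∈ K, g x ≤ B := fun x hx => hB ⟨x, hx, rfl⟩
  refine hK.tendsto_nhds_of_tendsto_comp_of_forall_lt hf hx₀ (.of_forall huK) ?_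
  have hlower : ∀ᶠ ν in atTop, f x₀ - (B - g x₀) / ν ≤ f (u ν) := by
    filter_upwards [eventually_gt_atTop 0] with ν hν
    have hcompare := isMaxOn_iff.1 (hu ν) x₀ hx₀K
    have hgu := hB _ (huK ν)
    rw [sub_le_comm, le_div_iff₀ hν]
    linarith
  have hupper : ∀ ν, f (u ν) ≤ f x₀ := fun ν => by
    rcases eq_or_ne (u ν) x₀ with h | h
    · rw [h]
    · exact (hx₀ _ (huK ν) h).le
  have hbound : Tendsto (fun ν : ℝ => f x₀ - (B - g x₀) / ν) atTop (𝓝 (f x₀)) := by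
    simpa using (tendsto_const_nhds (x := f x₀)).sub
      ((tendsto_const_nhds (x := B - g x₀)).div_atTop tendsto_id)
  exact tendsto_of_tendsto_of_tendsto_of_le_of_le' hbound tendsto_const_nhds hlower
    (.of_forall hupper)

theorem stmt_7_general (M : ℕ) (K : Set (EuclideanSpace ℝ (Fin M)))
    (hKcp : IsCompact K)
    (Q : Matrix (Fin M) (Fin M) ℝ) (q a L : EuclideanSpace ℝ (Fin M))
    (d : EuclideanSpace ℝ (Fin M) → EuclideanSpace ℝ (Fin M)) (hd : Continuous d)
    (c : EuclideanSpace ℝ (Fin M) → ℝ → ℝ)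
    (hc : ∀ u ν, c u ν = (u : Fin M → ℝ) ⬝ᵥ Q.mulVec u + ⟪q, u⟫ + ν * ⟪a, u⟫ + ⟪L, d u⟫)
    (uStar : EuclideanSpace ℝ (Fin M)) (huK : uStar ∈ K)
    (hstrict : ∀ u ∈ K, u ≠ uStar → ⟪a, u⟫ < ⟪a, uStar⟫)
    (uc : ℝ → EuclideanSpace ℝ (Fin M))
    (hucK : ∀ ν, uc ν ∈ K)
    (hucmax : ∀ ν, ∀ u ∈ K, c u ν ≤ c (uc ν) ν) :
    Tendsto uc atTop (nhds uStar) := by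
  set g : EuclideanSpace ℝ (Fin M) → ℝ :=
    fun u => (u : Fin M → ℝ) ⬝ᵥ Q.mulVec u + ⟪q, u⟫ + ⟪L, d u⟫
  have hg : Continuous g := by fun_prop
  refine hKcp.tendsto_nhds_of_isMaxOn_add_mul (by fun_prop) (hKcp.bddAbove_image hg.continuousOn)
    huK hstrict hucK fun ν => isMaxOn_iff.2 fun u hu => ?_
  have hcompare := hucmax ν u hu
  rw [hc, hc] at hcompare
  linarith

/-- Lemma 2 of the paper: with capability
`c(u, ν) = ⟨u, Q u⟩ + ⟨q, u⟩ + ν⟨a, u⟩ + ⟨L, d u⟩`, if `uStar` is the unique maximizer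
of `⟨a, ·⟩` over the nonempty compact set `K` and `uc ν` maximizes `c(·, ν)` over `K`
for every `ν`, then `uc ν → uStar` as `ν → ∞`. -/
theorem stmt_7 (M : ℕ) (hM : 0 < M) (K : Set (EuclideanSpace ℝ (Fin M)))
    (hKne : K.Nonempty) (hKcp : IsCompact K)
    (Q : Matrix (Fin M) (Fin M) ℝ) (q a L : EuclideanSpace ℝ (Fin M))
    (d : EuclideanSpace ℝ (Fin M) → EuclideanSpace ℝ (Fin M)) (hd : Continuous d)
    (c : EuclideanSpace ℝ (Fin M) → ℝ → ℝ)
    (hc : ∀ u ν, c u ν = (u : Fin M → ℝ) ⬝ᵥ Q.mulVec u + ⟪q, u⟫ + ν * ⟪a, u⟫ + ⟪L, d u⟫)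
    (uStar : EuclideanSpace ℝ (Fin M)) (huK : uStar ∈ K)
    (hmax : ∀ u ∈ K, ⟪a, u⟫ ≤ ⟪a, uStar⟫)
    (hstrict : ∀ u ∈ K, u ≠ uStar → ⟪a, u⟫ < ⟪a, uStar⟫)
    (uc : ℝ → EuclideanSpace ℝ (Fin M))
    (hucK : ∀ ν, uc ν ∈ K)
    (hucmax : ∀ ν, ∀ u ∈ K, c u ν ≤ c (uc ν) ν) :
    Tendsto uc atTop (nhds uStar) :=
  stmt_7_general M K hKcp Q q a L d hd c hc uStar huK hstrict uc hucK hucmax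
end
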